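/- arXiv:1410.2789 — 2 statements merged into one kernel-verified Lean document; each statement's English description precedes it below -/
import Mathlib

section
/- Let M be a smooth manifold, let α be a smooth complex-valued 1-form, Θ a smooth complex 2-form, and η a smooth real 1-form on M satisfying dα ∧ η = Θ ∧ η and dη = (α + ᾱ) ∧ η. Then for n ≥ 2, d((iΘ − (1/n) iα ∧ ᾱ)^{n−1} ∧ iα ∧ η) = (iΘ − (1/n) iα ∧ ᾱ)^n ∧ η. -/
/-- An abstract calculus of smooth complex-valued differential forms on a compact
oriented smooth manifold (all degrees collected in one algebra `A`, with the
grading recorded by the predicate `deg`): wedge product is `*`, `d` is the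
exterior derivative, `conj` is complex conjugation of forms, `integral` is
integration of top-degree forms over the compact oriented manifold (so that
Stokes' theorem holds), `pos` singles out the positive volume forms, and
`nonvanishing` the nowhere-vanishing forms. -/
structure FormCalculus where
  A : Type
  [ring : Ring A]
  [alg : Algebra ℂ A]
  deg : ℕ → A → Prop
  d : A → A
  conj : A → A
  integral : A → ℂ
  pos : A → Prop
  nonvanishing : A → Prop
  deg_add : ∀ (k : ℕ) (a b : A), deg k a → deg k b → deg k (a + b)
  deg_smul : ∀ (k : ℕ) (c : ℂ) (a : A), deg k a → deg k (c • a)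
  deg_mul : ∀ (j k : ℕ) (a b : A), deg j a → deg k b → deg (j + k) (a * b)
  deg_d : ∀ (k : ℕ) (a : A), deg k a → deg (k + 1) (d a)
  d_add : ∀ a b : A, d (a + b) = d a + d b
  d_smul : ∀ (c : ℂ) (a : A), d (c • a) = c • d a
  d_d : ∀ a : A, d (d a) = 0
  leibniz : ∀ (j : ℕ) (a b : A), deg j a →
    d (a * b) = d a * b + ((-1 : ℂ) ^ j) • (a * d b)
  comm : ∀ (j k : ℕ) (a b : A), deg j a → deg k b →
    a * b = ((-1 : ℂ) ^ (j * k)) • (b * a)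
  conj_add : ∀ a b : A, conj (a + b) = conj a + conj b
  conj_smul : ∀ (c : ℂ) (a : A), conj (c • a) = (starRingEnd ℂ c) • conj a
  conj_mul : ∀ a b : A, conj (a * b) = conj a * conj b
  conj_conj : ∀ a : A, conj (conj a) = a
  conj_d : ∀ a : A, conj (d a) = d (conj a)
  integral_add : ∀ a b : A, integral (a + b) = integral a + integral b
  integral_smul : ∀ (c : ℂ) (a : A), integral (c • a) = c * integral a
  /-- Stokes' theorem on the compact manifold without boundary. -/
  stokes : ∀ a : A, integral (d a) = 0
  /-- A positive volume form has positive total integral. -/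
  pos_integral : ∀ a : A, pos a → 0 < (integral a).re

attribute [instance] FormCalculus.ring FormCalculus.alg

/-!
Applying `d` to `dα ∧ η = Θ ∧ η` gives `dΘ ∧ η = (dα − Θ) ∧ dη`, which vanishes because
`(dα − Θ) ∧ η = 0` and `dη = (α + ᾱ) ∧ η`. Hence `d(Θ^k ∧ α ∧ η) = Θ^k ∧ (Θ ∧ η − α ∧ ᾱ ∧ η)`.
On the other side `α ∧ ᾱ` annihilates `α ∧ η` and `α ∧ ᾱ ∧ η`, while `Θ` has even degree, so
`(Θ − (1/n) α ∧ ᾱ)^{n−1} ∧ α ∧ η = Θ^{n−1} ∧ α ∧ η` and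
`(Θ − (1/n) α ∧ ᾱ)^n ∧ η = Θ^n ∧ η − Θ^{n−1} ∧ α ∧ ᾱ ∧ η`.
-/

section PowMul

variable {R : Type*} [Ring R] {a b x y : R}

theorem sub_pow_mul_of_mul_eq_zero (hax : Commute a x) (hbx : b * x = 0) (m : ℕ) :
    (a - b) ^ m * x = a ^ m * x := by
  induction m with
  | zero => simp
  | succ m ih =>
    have hbax : b * (a ^ m * x) = 0 := by
      rw [(hax.pow_left m).eq, ← mul_assoc, hbx, zero_mul]
    rw [pow_succ', mul_assoc, ih, sub_mul, hbax, sub_zero, pow_succ', mul_assoc]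

theorem sub_pow_succ_mul (hax : Commute a x) (hay : Commute a y) (hbx : b * x = y)
    (hby : b * y = 0) (m : ℕ) :
    (a - b) ^ (m + 1) * x = a ^ (m + 1) * x - (m + 1) • (a ^ m * y) := by
  induction m with
  | zero => simp [sub_mul, hbx]
  | succ m ih =>
    have hbay : b * (a ^ m * y) = 0 := by
      rw [(hay.pow_left m).eq, ← mul_assoc, hby, zero_mul]
    have hbax : b * (a ^ (m + 1) * x) = a ^ (m + 1) * y := by
      rw [(hax.pow_left _).eq, ← mul_assoc, hbx, (hay.pow_left _).eq]
    rw [pow_succ' (a - b), mul_assoc, ih, sub_mul, mul_sub, mul_sub, mul_smul_comm, hbax,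
      mul_smul_comm, hbay, smul_zero, sub_zero, ← mul_assoc, ← mul_assoc, ← pow_succ',
      ← pow_succ', sub_sub, ← succ_nsmul]

end PowMul

namespace FormCalculus

variable (S : FormCalculus) {k : ℕ} {a b x D Θ α β η : S.A}

theorem deg_sub (ha : S.deg k a) (hb : S.deg k b) : S.deg k (a - b) := by
  rw [sub_eq_add_neg, ← neg_one_smul ℂ b]
  exact S.deg_add k _ _ ha (S.deg_smul k _ _ hb)

theorem commute_of_deg_two (ha : S.deg 2 a) (hb : S.deg k b) : Commute a b := by
  rw [Commute, SemiconjBy, S.comm 2 k a b ha hb, (even_two_mul k).neg_one_pow, one_smul]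

theorem mul_anticomm (ha : S.deg 1 a) (hb : S.deg 1 b) : a * b = -(b * a) := by
  simpa using S.comm 1 1 a b ha hb

theorem mul_self_eq_zero_of_deg_one (ha : S.deg 1 a) : a * a = 0 := by
  have h : (2 : ℂ) • (a * a) = 0 := by
    rw [two_smul]
    nth_rewrite 2 [S.mul_anticomm ha ha]
    exact add_neg_cancel _
  simpa using h

theorem mul_mul_anticomm (hx : S.deg 1 x) (hη : S.deg 1 η) : D * (x * η) = -(D * η * x) := by
  rw [S.mul_anticomm hx hη, mul_neg, mul_assoc]

theorem conj_injective : Function.Injective S.conj :=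
  Function.Involutive.injective S.conj_conj

theorem conj_zero : S.conj 0 = 0 := by
  simpa using S.conj_smul 0 0

-- The calculus does not record the degree of `conj x`; conjugating moves it back onto `x`.
theorem mul_conj_mul_eq_zero (hx : S.deg 1 x) (hη : S.deg 1 η) (hreal : S.conj η = η)
    (h : D * η = 0) : D * (S.conj x * η) = 0 := by
  apply S.conj_injective
  rw [S.conj_zero, S.conj_mul, S.conj_mul, S.conj_conj, hreal, S.mul_mul_anticomm hx hη,
    ← hreal, ← S.conj_mul, h, S.conj_zero, zero_mul, neg_zero]

theorem d_mul_of_deg_one (ha : S.deg 1 a) : S.d (a * b) = S.d a * b - a * S.d b := by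
  simp [S.leibniz 1 a b ha, sub_eq_add_neg]

theorem d_mul_of_deg_two (ha : S.deg 2 a) : S.d (a * b) = S.d a * b + a * S.d b := by
  simp [S.leibniz 2 a b ha]

theorem d_pow_mul (hΘ : S.deg 2 Θ) (hx : S.deg k x) (h : S.d Θ * x = 0) (m : ℕ) :
    S.d (Θ ^ m * x) = Θ ^ m * S.d x := by
  induction m with
  | zero => simp
  | succ m ih =>
    rw [pow_succ', mul_assoc, S.d_mul_of_deg_two hΘ, ih,
      ((S.commute_of_deg_two hΘ hx).pow_left m).eq,
      ← mul_assoc, h, zero_mul, zero_add, mul_assoc]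

theorem deg_conj_mul (hα : S.deg 1 α) (hη : S.deg 1 η) (e2 : S.d η = (α + S.conj α) * η) :
    S.deg 2 (S.conj α * η) := by
  have h : S.conj α * η = S.d η - α * η := by rw [e2, add_mul, add_sub_cancel_left]
  rw [h]
  exact S.deg_sub (S.deg_d 1 η hη) (S.deg_mul 1 1 α η hα hη)

theorem d_mul_eq_zero_of_d_mul_eq (hα : S.deg 1 α) (hΘ : S.deg 2 Θ) (hη : S.deg 1 η)
    (hreal : S.conj η = η) (e1 : S.d α * η = Θ * η) (e2 : S.d η = (α + S.conj α) * η) :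
    S.d Θ * η = 0 := by
  have hD : (S.d α - Θ) * η = 0 := by rw [sub_mul, e1, sub_self]
  have hdΘ : S.d Θ * η = (S.d α - Θ) * S.d η := by
    have h := congrArg S.d e1
    rw [S.d_mul_of_deg_two (S.deg_d 1 α hα), S.d_mul_of_deg_two hΘ, S.d_d, zero_mul,
      zero_add] at h
    rw [sub_mul, h, add_sub_cancel_right]
  rw [hdΘ, e2, add_mul, mul_add, S.mul_mul_anticomm hα hη, hD, zero_mul, neg_zero, zero_add,
    S.mul_conj_mul_eq_zero hα hη hreal hD]

theorem d_mul_eq_sub (hα : S.deg 1 α) (e1 : S.d α * η = Θ * η)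
    (e2 : S.d η = (α + S.conj α) * η) :
    S.d (α * η) = Θ * η - α * (S.conj α * η) := by
  rw [S.d_mul_of_deg_one hα, e1, e2, add_mul, mul_add, ← mul_assoc α α,
    S.mul_self_eq_zero_of_deg_one hα, zero_mul, zero_add]

theorem mul_mul_eq_neg_mul_mul (hα : S.deg 1 α) (hη : S.deg 1 η) (hβη : S.deg 2 (β * η)) :
    β * (α * η) = -(α * (β * η)) := by
  rw [S.mul_mul_anticomm hα hη, (S.commute_of_deg_two hβη hα).eq]

theorem mul_mul_mul_eq_zero (hα : S.deg 1 α) (hη : S.deg 1 η) (hβη : S.deg 2 (β * η)) :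
    α * β * (α * η) = 0 := by
  rw [mul_assoc, S.mul_mul_eq_neg_mul_mul hα hη hβη, mul_neg, ← mul_assoc,
    S.mul_self_eq_zero_of_deg_one hα, zero_mul, neg_zero]

theorem mul_conj_mul_mul_conj_mul_eq_zero (hα : S.deg 1 α) (hη : S.deg 1 η)
    (hreal : S.conj η = η) (hβη : S.deg 2 (S.conj α * η)) :
    α * S.conj α * (α * (S.conj α * η)) = 0 := by
  apply S.conj_injective
  simp only [S.conj_mul, S.conj_conj, hreal, S.conj_zero]
  rw [S.mul_mul_eq_neg_mul_mul hα hη hβη, mul_neg, mul_assoc, ← mul_assoc α α,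
    S.mul_self_eq_zero_of_deg_one hα, zero_mul, mul_zero, neg_zero]

end FormCalculus

/-- On a smooth manifold, if `α` is a smooth complex 1-form,
`Θ` a smooth complex 2-form and `η` a smooth real 1-form with
`dα ∧ η = Θ ∧ η` and `dη = (α + ᾱ) ∧ η`, then for `n ≥ 2`, with
`Ω = iΘ − (1/n) iα ∧ ᾱ`, one has
`d(Ω^{n−1} ∧ iα ∧ η) = Ω^n ∧ η`. -/
theorem stmt_1 (S : FormCalculus) (n : ℕ) (hn : 2 ≤ n)
    (α Θ η : S.A) (hα : S.deg 1 α) (hΘ : S.deg 2 Θ)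
    (hη : S.deg 1 η) (hηreal : S.conj η = η)
    (e1 : S.d α * η = Θ * η)
    (e2 : S.d η = (α + S.conj α) * η)
    (Ω : S.A)
    (hΩ : Ω = Complex.I • Θ - (1 / (n : ℂ)) • (Complex.I • (α * S.conj α))) :
    S.d (Ω ^ (n - 1) * ((Complex.I • α) * η)) = Ω ^ n * η := by
  obtain ⟨m, rfl⟩ : ∃ m, n = m + 1 := ⟨n - 1, by omega⟩
  set c : ℂ := 1 / ((m + 1 : ℕ) : ℂ)
  set γ := c • (α * S.conj α)
  have hΩ' : Ω = Complex.I • (Θ - γ) := by rw [hΩ, smul_sub, smul_comm]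
  have hc : ((m + 1 : ℕ) : ℂ) * c = 1 := mul_one_div_cancel (Nat.cast_ne_zero.mpr m.succ_ne_zero)
  have hαη : S.deg 2 (α * η) := S.deg_mul 1 1 α η hα hη
  have hβη : S.deg 2 (S.conj α * η) := S.deg_conj_mul hα hη e2
  have hαβη : S.deg 3 (α * (S.conj α * η)) := S.deg_mul 1 2 _ _ hα hβη
  have hγαη : γ * (α * η) = 0 := by
    rw [smul_mul_assoc, S.mul_mul_mul_eq_zero hα hη hβη, smul_zero]
  have hγη : γ * η = c • (α * (S.conj α * η)) := by rw [smul_mul_assoc, mul_assoc]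
  have hγαβη : γ * (c • (α * (S.conj α * η))) = 0 := by
    rw [smul_mul_smul_comm, S.mul_conj_mul_mul_conj_mul_eq_zero hα hη hηreal hβη, smul_zero]
  have hdΘαη : S.d Θ * (α * η) = 0 := by
    rw [S.mul_mul_anticomm hα hη, S.d_mul_eq_zero_of_d_mul_eq hα hΘ hη hηreal e1 e2, zero_mul,
      neg_zero]
  calc S.d (Ω ^ (m + 1 - 1) * (Complex.I • α * η))
      = Complex.I ^ (m + 1) • S.d (Θ ^ m * (α * η)) := by
        rw [Nat.add_sub_cancel, hΩ', smul_pow, smul_mul_assoc Complex.I α η, smul_mul_smul_comm,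
          sub_pow_mul_of_mul_eq_zero (S.commute_of_deg_two hΘ hαη) hγαη, S.d_smul, pow_succ]
    _ = Complex.I ^ (m + 1) • (Θ ^ (m + 1) * η - Θ ^ m * (α * (S.conj α * η))) := by
        rw [S.d_pow_mul hΘ hαη hdΘαη, S.d_mul_eq_sub hα e1 e2, mul_sub, ← mul_assoc, ← pow_succ]
    _ = Ω ^ (m + 1) * η := by
        rw [hΩ', smul_pow, smul_mul_assoc, sub_pow_succ_mul (S.commute_of_deg_two hΘ hη)
          ((S.commute_of_deg_two hΘ hαβη).smul_right c) hγη hγαβη, mul_smul_comm,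
          ← Nat.cast_smul_eq_nsmul ℂ, smul_smul, hc, one_smul]
end

section
/- Let M be a compact oriented smooth 3-manifold, α a smooth complex 1-form, Θ a smooth complex 2-form, and η a smooth real 1-form on M with dα ∧ η = Θ ∧ η and dη = (α + ᾱ) ∧ η. Then ∫_M iΘ ∧ η = ∫_M iα ∧ ᾱ ∧ η. -/
/-! Integrating by parts (Leibniz rule and Stokes), `∫ dα ∧ η = ∫ α ∧ dη`. Substituting
`dη = (α + ᾱ) ∧ η` and using `α ∧ α = 0` for the 1-form `α` leaves `∫ α ∧ ᾱ ∧ η`, while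
`dα ∧ η = Θ ∧ η` turns the left side into `∫ Θ ∧ η`. -/

namespace FormCalculus

variable (S : FormCalculus)

theorem mul_self_eq_zero_of_odd {k : ℕ} (hk : Odd k) {a : S.A} (ha : S.deg k a) :
    a * a = 0 := by
  have hanti : a * a = -(a * a) := by
    simpa [hk.mul hk |>.neg_one_pow] using S.comm k k a a ha ha
  have htwo : (2 : ℂ) • (a * a) = 0 := by
    rw [two_smul]
    nth_rewrite 1 [hanti]
    exact neg_add_cancel _
  simpa using htwo

theorem integral_d_mul {j : ℕ} {a : S.A} (ha : S.deg j a) (b : S.A) :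
    S.integral (S.d a * b) = -(-1 : ℂ) ^ j * S.integral (a * S.d b) := by
  have hstokes := S.stokes (a * b)
  rw [S.leibniz j a b ha, S.integral_add, S.integral_smul] at hstokes
  linear_combination hstokes

end FormCalculus

theorem stmt_3_general (S : FormCalculus)
    (α Θ η : S.A) (hα : S.deg 1 α)
    (e1 : S.d α * η = Θ * η)
    (e2 : S.d η = (α + S.conj α) * η) :
    S.integral ((Complex.I • Θ) * η)
      = S.integral ((Complex.I • (α * S.conj α)) * η) := by
  have hα_dη : α * S.d η = α * S.conj α * η := by
    rw [e2, ← mul_assoc, mul_add, S.mul_self_eq_zero_of_odd odd_one hα, zero_add]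
  have hΘη : S.integral (Θ * η) = S.integral (α * S.conj α * η) := by
    rw [← e1, S.integral_d_mul hα, hα_dη]
    ring
  rw [smul_mul_assoc, smul_mul_assoc, S.integral_smul, S.integral_smul, hΘη]

/-- On a compact oriented smooth 3-manifold (encoded by the
form calculus `S` with its Stokes-type integral), if `α` is a smooth complex
1-form, `Θ` a smooth complex 2-form and `η` a smooth real 1-form with
`dα ∧ η = Θ ∧ η` and `dη = (α + ᾱ) ∧ η`, then
`∫_M iΘ ∧ η = ∫_M iα ∧ ᾱ ∧ η`. -/
theorem stmt_3 (S : FormCalculus)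
    (α Θ η : S.A) (hα : S.deg 1 α) (hΘ : S.deg 2 Θ)
    (hη : S.deg 1 η) (hηreal : S.conj η = η)
    (e1 : S.d α * η = Θ * η)
    (e2 : S.d η = (α + S.conj α) * η) :
    S.integral ((Complex.I • Θ) * η)
      = S.integral ((Complex.I • (α * S.conj α)) * η) :=
  stmt_3_general S α Θ η hα e1 e2
end
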